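/- arXiv:2506.00231 — 5 statements merged into one kernel-verified Lean document; each statement's English description precedes it below -/
import Mathlib

section
/- Let H be a complex Hilbert space, let A₀ be a densely defined skew-symmetric operator on H, and let B be a dissipative operator on H that extends A₀ (i.e. D(A₀) ⊆ D(B) and Bψ = A₀ψ for all ψ ∈ D(A₀)). Then B is a restriction of the adjoint of -A₀, i.e. D(B) ⊆ D((-A₀)*) and (-A₀)*ψ = Bψ for all ψ ∈ D(B). -/
open scoped ComplexInnerProductSpace

/-- Let `H` be a complex Hilbert space, `A₀` a densely defined
skew-symmetric operator on `H` (given by a domain `A₀dom` together with a linear map `A₀`,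
only its values on `A₀dom` being relevant), and `B` a dissipative operator extending `A₀`.
Then `B` is a restriction of the adjoint of `-A₀`: every `ψ ∈ D(B)` belongs to
`D((-A₀)*)` (i.e. there is `η` with `⟪ψ, -A₀φ⟫ = ⟪η, φ⟫` for all `φ ∈ D(A₀)`), and the
adjoint value is `Bψ` (i.e. `η = Bψ` works). -/
theorem stmt_0
    {H : Type*} [NormedAddCommGroup H] [InnerProductSpace ℂ H] [CompleteSpace H]
    (A₀dom : Submodule ℂ H) (A₀ : H →ₗ[ℂ] H)
    (Bdom : Submodule ℂ H) (B : H →ₗ[ℂ] H)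
    (hdense : Dense (A₀dom : Set H))
    (hskew₁ : ∀ ψ ∈ A₀dom, (⟪A₀ ψ, ψ⟫).re ≤ 0)
    (hskew₂ : ∀ ψ ∈ A₀dom, (⟪-(A₀ ψ), ψ⟫).re ≤ 0)
    (hextdom : A₀dom ≤ Bdom)
    (hextval : ∀ ψ ∈ A₀dom, B ψ = A₀ ψ)
    (hdiss : ∀ ψ ∈ Bdom, (⟪B ψ, ψ⟫).re ≤ 0) :
    ∀ ψ ∈ Bdom,
      (∃ η : H, ∀ φ ∈ A₀dom, ⟪ψ, -(A₀ φ)⟫ = ⟪η, φ⟫) ∧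
      (∀ φ ∈ A₀dom, ⟪ψ, -(A₀ φ)⟫ = ⟪B ψ, φ⟫) := by
  intro ψ hψ
  have key : ∀ φ ∈ A₀dom, ⟪ψ, -(A₀ φ)⟫ = ⟪B ψ, φ⟫ := by
    intro φ hφ
    have hskew : (⟪A₀ φ, φ⟫ : ℂ).re = 0 := by
      have h1 := hskew₁ φ hφ
      have h2 := hskew₂ φ hφ
      rw [inner_neg_left] at h2
      simp only [Complex.neg_re] at h2
      linarith
    set a : ℂ := ⟪B ψ, φ⟫ with ha
    set b : ℂ := ⟪A₀ φ, ψ⟫ with hb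
    have hg : ∀ c : ℂ, (c * (a + (starRingEnd ℂ) b)).re ≤ -(⟪B ψ, ψ⟫ : ℂ).re := by
      intro c
      have hmem : ψ + c • φ ∈ Bdom := Bdom.add_mem hψ (Bdom.smul_mem c (hextdom hφ))
      have hd := hdiss _ hmem
      have hBval : B (ψ + c • φ) = B ψ + c • A₀ φ := by
        rw [map_add, map_smul, hextval φ hφ]
      rw [hBval] at hd
      have expand : (⟪B ψ + c • A₀ φ, ψ + c • φ⟫ : ℂ)
          = ⟪B ψ, ψ⟫ + c * a + (starRingEnd ℂ) c * b
            + (starRingEnd ℂ) c * c * ⟪A₀ φ, φ⟫ := by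
        simp only [inner_add_left, inner_add_right, inner_smul_left, inner_smul_right,
          ha, hb]
        ring
      rw [expand] at hd
      have hcc : ((starRingEnd ℂ) c * c * ⟪A₀ φ, φ⟫).re = 0 := by
        have : (starRingEnd ℂ) c * c = (Complex.normSq c : ℂ) := by
          rw [mul_comm]; exact Complex.mul_conj c
        rw [this]
        simp [Complex.re_ofReal_mul, hskew]
      have hcb : ((starRingEnd ℂ) c * b).re = (c * (starRingEnd ℂ) b).re := by
        rw [← Complex.conj_re ((starRingEnd ℂ) c * b), map_mul]
        simp
      simp only [Complex.add_re, mul_add] at hd ⊢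
      rw [hcc] at hd
      linarith [hd, hcb]
    have hz : a + (starRingEnd ℂ) b = 0 := by
      by_contra hne
      set z : ℂ := a + (starRingEnd ℂ) b with hzdef
      have hzpos : 0 < Complex.normSq z := Complex.normSq_pos.mpr hne
      have := hg ((((-(⟪B ψ, ψ⟫ : ℂ).re) / Complex.normSq z + 1 : ℝ) : ℂ) * (starRingEnd ℂ) z)
      rw [mul_assoc, mul_comm ((starRingEnd ℂ) z) z, Complex.mul_conj] at this
      rw [← Complex.ofReal_mul, Complex.ofReal_re] at this
      rw [add_mul, div_mul_cancel₀ _ (ne_of_gt hzpos), one_mul] at this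
      linarith
    have hψφ : (⟪ψ, A₀ φ⟫ : ℂ) = (starRingEnd ℂ) b := by
      rw [hb, ← inner_conj_symm]
    rw [inner_neg_right, hψφ]
    linear_combination -hz
  exact ⟨⟨B ψ, fun φ hφ => key φ hφ⟩, key⟩
end

section
/- Let A₀ be a densely defined skew-symmetric operator on a complex Hilbert space H, let A := (-A₀)*, and let (H₊, H₋, G₊, G₋) be a boundary quadruple for A₀. Then the closure of A₀ (its smallest closed extension, which exists since A₀ is densely defined and skew-symmetric) has domain D(closure(A₀)) = ker G₊ ∩ ker G₋, and closure(A₀)ψ = Aψ for all ψ ∈ D(closure(A₀)). -/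
/-!
Skew-symmetry of `A₀` polarizes to `⟪A₀ ψ, φ⟫ + ⟪ψ, A₀ φ⟫ = 0`, so `A` extends `A₀`. The closure
of a graph is its double adjoint, and the adjoint of the graph of `A₀` is the graph of `-A`;
hence `(x, y)` lies in the closure iff `⟪A v, x⟫ + ⟪v, y⟫ = 0` for all `v ∈ D(A)`. Testing with
`v ∈ D(A₀)` gives `x ∈ D(A)` and `y = A x`, after which Green's identity turns the condition into
`⟪G₊ v, G₊ x⟫ = ⟪G₋ v, G₋ x⟫` for all `v ∈ D(A)`; by surjectivity of `(G₊, G₋)` this holds exactly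
when `G₊ x = 0` and `G₋ x = 0`.
-/

open scoped ComplexInnerProductSpace

section

open scoped InnerProductSpace

variable {𝕜 E F : Type*} [RCLike 𝕜] [NormedAddCommGroup E] [InnerProductSpace 𝕜 E]
  [NormedAddCommGroup F] [InnerProductSpace 𝕜 F]

namespace Submodule

theorem adjoint_adjoint [CompleteSpace E] [CompleteSpace F] (g : Submodule 𝕜 (E × F)) :
    g.adjoint.adjoint = g.topologicalClosure := by
  let e := WithLp.prodContinuousLinearEquiv 2 𝕜 E F
  let P := g.comap (e : WithLp 2 (E × F) →ₗ[𝕜] E × F)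
  have hP : ∀ a b, (a, b) ∈ g.adjoint ↔ WithLp.toLp 2 (-b, a) ∈ Pᗮ := by
    intro a b
    simp only [mem_orthogonal, mem_adjoint_iff, P, mem_comap, WithLp.prod_inner_apply]
    constructor
    · intro h u hu
      have := h _ _ hu
      simp only [inner_neg_right] at this ⊢
      linear_combination this
    · intro h a' b' hab
      have := h (WithLp.toLp 2 (a', b')) hab
      simp only [inner_neg_right] at this
      linear_combination this
  ext x
  have hx : x ∈ g.topologicalClosure ↔ e.symm x ∈ Pᗮᗮ := by
    rw [orthogonal_orthogonal_eq_closure, ← SetLike.mem_coe, topologicalClosure_coe,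
      ← SetLike.mem_coe, topologicalClosure_coe, comap_coe]
    change _ ↔ e.symm x ∈ closure (e ⁻¹' _)
    rw [← e.preimage_closure]
    simp
  rw [hx, mem_adjoint_iff, mem_orthogonal]
  constructor
  · intro h u hu
    have := h (WithLp.ofLp u).2 (-(WithLp.ofLp u).1)
      ((hP _ _).2 (by simpa only [neg_neg, Prod.mk.eta, WithLp.toLp_ofLp] using hu))
    simp only [WithLp.ofLp_fst, inner_neg_left, WithLp.ofLp_snd,
      WithLp.prodContinuousLinearEquiv_symm_apply, WithLp.prod_inner_apply, e] at this ⊢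
    linear_combination -this
  · intro h a b hab
    have := h _ ((hP a b).1 hab)
    simp only [WithLp.prodContinuousLinearEquiv_symm_apply, WithLp.prod_inner_apply,
      inner_neg_left, e] at this ⊢
    linear_combination -this

end Submodule

namespace LinearMap

def graphOn (T : E →ₗ[𝕜] F) (D : Submodule 𝕜 E) : Submodule 𝕜 (E × F) :=
  D.prod ⊤ ⊓ T.graph

@[simp]
theorem mem_graphOn {T : E →ₗ[𝕜] F} {D : Submodule 𝕜 E} {x : E} {y : F} :
    (x, y) ∈ T.graphOn D ↔ x ∈ D ∧ y = T x := by
  simp [graphOn]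

theorem coe_graphOn (T : E →ₗ[𝕜] F) (D : Submodule 𝕜 E) :
    (T.graphOn D : Set (E × F)) = {p | p.1 ∈ D ∧ p.2 = T p.1} :=
  Set.ext fun _ => mem_graphOn

end LinearMap

/-- `B`, restricted to `D'`, is the adjoint of `S` with domain `D`. -/
structure IsAdjointOn (S : E →ₗ[𝕜] F) (D : Submodule 𝕜 E) (B : F →ₗ[𝕜] E)
    (D' : Submodule 𝕜 F) : Prop where
  mem_iff : ∀ x, x ∈ D' ↔ ∃ η, ∀ φ ∈ D, ⟪x, S φ⟫_𝕜 = ⟪η, φ⟫_𝕜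
  inner_map : ∀ x ∈ D', ∀ φ ∈ D, ⟪x, S φ⟫_𝕜 = ⟪B x, φ⟫_𝕜

namespace IsAdjointOn

variable {S T : E →ₗ[𝕜] F} {D : Submodule 𝕜 E} {B : F →ₗ[𝕜] E} {D' : Submodule 𝕜 F}

theorem forall_inner_eq_iff (h : IsAdjointOn S D B D') (hD : Dense (D : Set E)) (x : F) (η : E) :
    (∀ φ ∈ D, ⟪x, S φ⟫_𝕜 = ⟪η, φ⟫_𝕜) ↔ x ∈ D' ∧ η = B x := by
  constructor
  · intro hx
    have hxD : x ∈ D' := (h.mem_iff x).2 ⟨η, hx⟩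
    exact ⟨hxD, hD.eq_of_inner_left 𝕜 fun φ hφ => (hx φ hφ).symm.trans (h.inner_map x hxD φ hφ)⟩
  · rintro ⟨hx, rfl⟩
    exact h.inner_map x hx

theorem mem_adjoint_graphOn_iff (h : IsAdjointOn (-T) D B D') (hD : Dense (D : Set E))
    (y : F × E) : y ∈ (T.graphOn D).adjoint ↔ y.1 ∈ D' ∧ y.2 = -B y.1 := by
  rw [← neg_eq_iff_eq_neg, ← h.forall_inner_eq_iff hD, Submodule.mem_adjoint_iff]
  simp only [LinearMap.mem_graphOn, and_imp, forall_eq_apply_imp_iff]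
  refine forall₂_congr fun a _ => ?_
  rw [LinearMap.neg_apply, inner_neg_right, inner_neg_left, neg_inj, sub_eq_zero,
    ← inner_conj_symm y.1, ← inner_conj_symm y.2, (starRingEnd 𝕜).injective.eq_iff]

theorem mem_closure_graphOn_iff [CompleteSpace E] [CompleteSpace F]
    (h : IsAdjointOn (-T) D B D') (hD : Dense (D : Set E)) (x : E) (y : F) :
    (x, y) ∈ closure (T.graphOn D : Set (E × F)) ↔ ∀ v ∈ D', ⟪B v, x⟫_𝕜 + ⟪v, y⟫_𝕜 = 0 := by
  rw [← Submodule.topologicalClosure_coe, ← Submodule.adjoint_adjoint, SetLike.mem_coe,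
    Submodule.mem_adjoint_iff]
  simp only [h.mem_adjoint_graphOn_iff hD, and_imp, forall_eq_apply_imp_iff]
  refine forall₂_congr fun v _ => ?_
  rw [inner_neg_left, ← neg_add', neg_eq_zero]

theorem mem_and_eq_of_skew {T B : E →ₗ[𝕜] E} {D D' : Submodule 𝕜 E}
    (h : IsAdjointOn (-T) D B D') (hD : Dense (D : Set E))
    (hT : ∀ ψ ∈ D, ∀ φ ∈ D, ⟪T ψ, φ⟫_𝕜 + ⟪ψ, T φ⟫_𝕜 = 0) {ψ : E} (hψ : ψ ∈ D) :
    ψ ∈ D' ∧ T ψ = B ψ :=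
  (h.forall_inner_eq_iff hD ψ (T ψ)).1 fun φ hφ => by
    rw [LinearMap.neg_apply, inner_neg_right, neg_eq_iff_add_eq_zero, add_comm]
    exact hT ψ hψ φ hφ

theorem closure_graphOn_subset [CompleteSpace E] {T B : E →ₗ[𝕜] E} {D D' : Submodule 𝕜 E}
    (h : IsAdjointOn (-T) D B D') (hD : Dense (D : Set E))
    (hT : ∀ ψ ∈ D, ∀ φ ∈ D, ⟪T ψ, φ⟫_𝕜 + ⟪ψ, T φ⟫_𝕜 = 0) :
    closure (T.graphOn D : Set (E × E)) ⊆ B.graphOn D' := by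
  rintro ⟨x, y⟩ hxy
  refine LinearMap.mem_graphOn.2 <| (h.forall_inner_eq_iff hD x y).1 fun φ hφ => ?_
  obtain ⟨hφ', hBφ⟩ := h.mem_and_eq_of_skew hD hT hφ
  have hperp := (h.mem_closure_graphOn_iff hD x y).1 hxy φ hφ'
  rw [← hBφ] at hperp
  rw [LinearMap.neg_apply, inner_neg_right, neg_eq_iff_add_eq_zero, ← inner_conj_symm,
    ← inner_conj_symm y, ← map_add, hperp, map_zero]

end IsAdjointOn

theorem inner_map_add_inner_map_eq_zero {H : Type*} [NormedAddCommGroup H]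
    [InnerProductSpace ℂ H] {D : Submodule ℂ H} {T : H →ₗ[ℂ] H}
    (hT : ∀ ψ ∈ D, (⟪T ψ, ψ⟫_ℂ).re = 0) {ψ φ : H} (hψ : ψ ∈ D) (hφ : φ ∈ D) :
    ⟪T ψ, φ⟫_ℂ + ⟪ψ, T φ⟫_ℂ = 0 := by
  have hdiag : ∀ χ ∈ D, ⟪T χ, χ⟫_ℂ + ⟪χ, T χ⟫_ℂ = 0 := fun χ hχ => by
    rw [← inner_conj_symm χ, Complex.add_conj, hT χ hχ, mul_zero, Complex.ofReal_zero]
  have h1 := hdiag (ψ + φ) (add_mem hψ hφ)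
  have h2 := hdiag (ψ + Complex.I • φ) (add_mem hψ (D.smul_mem _ hφ))
  simp only [map_add, map_smul, inner_add_left, inner_add_right, inner_smul_left,
    inner_smul_right, Complex.conj_I] at h1 h2
  linear_combination (1 / 2 : ℂ) * h1 - (Complex.I / 2) * h2
    + ((Complex.I - 1) / 2) * hdiag ψ hψ + ((Complex.I - 1) / 2) * hdiag φ hφ
    + ((⟪T ψ, φ⟫_ℂ + ⟪ψ, T φ⟫_ℂ - ⟪T φ, ψ⟫_ℂ - ⟪φ, T ψ⟫_ℂ
        - Complex.I * (⟪T φ, φ⟫_ℂ + ⟪φ, T φ⟫_ℂ)) / 2) * Complex.I_sq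

theorem eq_zero_of_forall_inner_sub_inner_eq_zero {X Hp Hm : Type*} [NormedAddCommGroup Hp]
    [InnerProductSpace 𝕜 Hp] [NormedAddCommGroup Hm] [InnerProductSpace 𝕜 Hm]
    {Gp : X → Hp} {Gm : X → Hm} {S : Set X}
    (hsurj : ∀ (ξ : Hp) (ζ : Hm), ∃ ψ ∈ S, Gp ψ = ξ ∧ Gm ψ = ζ) {a : Hp} {b : Hm}
    (h : ∀ v ∈ S, ⟪Gp v, a⟫_𝕜 - ⟪Gm v, b⟫_𝕜 = 0) : a = 0 ∧ b = 0 := by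
  obtain ⟨v, hv, hva, hv0⟩ := hsurj a 0
  obtain ⟨w, hw, hw0, hwb⟩ := hsurj 0 b
  have ha := h v hv
  have hb := h w hw
  rw [hva, hv0, inner_zero_left, sub_zero] at ha
  rw [hw0, hwb, inner_zero_left, zero_sub, neg_eq_zero] at hb
  exact ⟨inner_self_eq_zero.1 ha, inner_self_eq_zero.1 hb⟩

end

theorem stmt_3_general
    {H Hp Hm : Type*}
    [NormedAddCommGroup H] [InnerProductSpace ℂ H] [CompleteSpace H]
    [NormedAddCommGroup Hp] [InnerProductSpace ℂ Hp]
    [NormedAddCommGroup Hm] [InnerProductSpace ℂ Hm]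
    (A₀dom : Submodule ℂ H) (A₀ : H →ₗ[ℂ] H)
    (hdense : Dense (A₀dom : Set H))
    (hskew₁ : ∀ ψ ∈ A₀dom, (⟪A₀ ψ, ψ⟫).re ≤ 0)
    (hskew₂ : ∀ ψ ∈ A₀dom, (⟪-(A₀ ψ), ψ⟫).re ≤ 0)
    (Adom : Submodule ℂ H) (A : H →ₗ[ℂ] H)
    (hAdom : ∀ x : H, x ∈ Adom ↔ ∃ η : H, ∀ φ ∈ A₀dom, ⟪x, -(A₀ φ)⟫ = ⟪η, φ⟫)
    (hAval : ∀ x ∈ Adom, ∀ φ ∈ A₀dom, ⟪x, -(A₀ φ)⟫ = ⟪A x, φ⟫)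
    (Gp : H →ₗ[ℂ] Hp) (Gm : H →ₗ[ℂ] Hm)
    (hGreen : ∀ ψ ∈ Adom, ∀ φ ∈ Adom,
      ⟪A ψ, φ⟫ + ⟪ψ, A φ⟫ = ⟪Gp ψ, Gp φ⟫ - ⟪Gm ψ, Gm φ⟫)
    (hSurj : ∀ (ξ : Hp) (ζ : Hm), ∃ ψ ∈ Adom, Gp ψ = ξ ∧ Gm ψ = ζ) :
    (∀ x : H,
        (∃ y : H, (x, y) ∈ closure {p : H × H | p.1 ∈ A₀dom ∧ p.2 = A₀ p.1}) ↔
          (x ∈ Adom ∧ Gp x = 0 ∧ Gm x = 0)) ∧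
    (∀ x y : H, (x, y) ∈ closure {p : H × H | p.1 ∈ A₀dom ∧ p.2 = A₀ p.1} → y = A x) := by
  have hadj : IsAdjointOn (-A₀) A₀dom A Adom := ⟨hAdom, hAval⟩
  have hskew : ∀ ψ ∈ A₀dom, ∀ φ ∈ A₀dom, ⟪A₀ ψ, φ⟫ + ⟪ψ, A₀ φ⟫ = 0 := fun ψ hψ φ hφ =>
    inner_map_add_inner_map_eq_zero
      (fun χ hχ => le_antisymm (hskew₁ χ hχ) (by simpa using hskew₂ χ hχ)) hψ hφ
  have hclosure := hadj.mem_closure_graphOn_iff hdense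
  have hsub := hadj.closure_graphOn_subset hdense hskew
  rw [← LinearMap.coe_graphOn]
  refine ⟨fun x => ⟨?_, ?_⟩, fun x y hxy => (LinearMap.mem_graphOn.1 (hsub hxy)).2⟩
  · rintro ⟨y, hxy⟩
    obtain ⟨hx, rfl⟩ := LinearMap.mem_graphOn.1 (hsub hxy)
    refine ⟨hx, eq_zero_of_forall_inner_sub_inner_eq_zero (𝕜 := ℂ) hSurj fun v hv => ?_⟩
    rw [← hGreen v hv x hx]
    exact (hclosure x _).1 hxy v hv
  · rintro ⟨hx, hp, hm⟩
    refine ⟨A x, (hclosure x _).2 fun v hv => ?_⟩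
    rw [hGreen v hv x hx, hp, hm, inner_zero_right, inner_zero_right, sub_zero]

/-- Let `A₀` be a densely defined skew-symmetric operator on a complex
Hilbert space `H`, let `A := (-A₀)*` (characterized by `hAdom`, `hAval`), and let
`(Hp, Hm, Gp, Gm)` be a boundary quadruple for `A₀`. The closure of `A₀` is the operator
whose graph is the closure of the graph of `A₀` in `H × H`. Then
`D(closure A₀) = ker G₊ ∩ ker G₋` (as subsets of `D(A)`), and `closure(A₀)ψ = Aψ` for all
`ψ ∈ D(closure A₀)`; equivalently, a point `x` admits some `y` with `(x, y)` in the
closed graph iff `x ∈ D(A)` with `G₊x = 0` and `G₋x = 0`, and any such `y` equals `Ax`. -/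
theorem stmt_3
    {H Hp Hm : Type*}
    [NormedAddCommGroup H] [InnerProductSpace ℂ H] [CompleteSpace H]
    [NormedAddCommGroup Hp] [InnerProductSpace ℂ Hp] [CompleteSpace Hp]
    [NormedAddCommGroup Hm] [InnerProductSpace ℂ Hm] [CompleteSpace Hm]
    (A₀dom : Submodule ℂ H) (A₀ : H →ₗ[ℂ] H)
    (hdense : Dense (A₀dom : Set H))
    (hskew₁ : ∀ ψ ∈ A₀dom, (⟪A₀ ψ, ψ⟫).re ≤ 0)
    (hskew₂ : ∀ ψ ∈ A₀dom, (⟪-(A₀ ψ), ψ⟫).re ≤ 0)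
    (Adom : Submodule ℂ H) (A : H →ₗ[ℂ] H)
    (hAdom : ∀ x : H, x ∈ Adom ↔ ∃ η : H, ∀ φ ∈ A₀dom, ⟪x, -(A₀ φ)⟫ = ⟪η, φ⟫)
    (hAval : ∀ x ∈ Adom, ∀ φ ∈ A₀dom, ⟪x, -(A₀ φ)⟫ = ⟪A x, φ⟫)
    (Gp : H →ₗ[ℂ] Hp) (Gm : H →ₗ[ℂ] Hm)
    (hGreen : ∀ ψ ∈ Adom, ∀ φ ∈ Adom,
      ⟪A ψ, φ⟫ + ⟪ψ, A φ⟫ = ⟪Gp ψ, Gp φ⟫ - ⟪Gm ψ, Gm φ⟫)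
    (hSurj : ∀ (ξ : Hp) (ζ : Hm), ∃ ψ ∈ Adom, Gp ψ = ξ ∧ Gm ψ = ζ) :
    (∀ x : H,
        (∃ y : H, (x, y) ∈ closure {p : H × H | p.1 ∈ A₀dom ∧ p.2 = A₀ p.1}) ↔
          (x ∈ Adom ∧ Gp x = 0 ∧ Gm x = 0)) ∧
    (∀ x y : H, (x, y) ∈ closure {p : H × H | p.1 ∈ A₀dom ∧ p.2 = A₀ p.1} → y = A x) :=
  stmt_3_general A₀dom A₀ hdense hskew₁ hskew₂ Adom A hAdom hAval Gp Gm hGreen hSurj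
end

section
/- Let A₀ be a densely defined skew-symmetric operator on a complex Hilbert space H, let A := (-A₀)*, let (H₊, H₋, G₊, G₋) be a boundary quadruple for A₀, and let Φ : H₋ → H₊ be a strictly contractive linear map, i.e. ‖Φξ‖_{H₊} < ‖ξ‖_{H₋} for all ξ ≠ 0. Suppose λ ∈ ℝ and ψ ∈ D(A) satisfy G₊ψ = Φ G₋ψ and Aψ = iλψ. Then G₊ψ = 0 and G₋ψ = 0; in particular ψ lies in ker G₊ ∩ ker G₋, hence in the domain of the closure of A₀, and closure(A₀)ψ = iλψ. -/
open scoped ComplexInnerProductSpace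

/-- Let `A₀` be a densely defined skew-symmetric operator on a complex
Hilbert space `H`, `A := (-A₀)*`, `(Hp, Hm, Gp, Gm)` a boundary quadruple for `A₀`, and
`Φ : Hm → Hp` strictly contractive. If `λ ∈ ℝ` and `ψ ∈ D(A)` satisfy `G₊ψ = Φ G₋ψ` and
`Aψ = iλψ`, then `G₊ψ = 0` and `G₋ψ = 0`; in particular `ψ ∈ ker G₊ ∩ ker G₋`, hence `ψ`
lies in the domain of the closure of `A₀` (the pair `(ψ, iλψ)` belongs to the closure of
the graph of `A₀`), and `closure(A₀)ψ = iλψ`. -/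
theorem stmt_6
    {H Hp Hm : Type*}
    [NormedAddCommGroup H] [InnerProductSpace ℂ H] [CompleteSpace H]
    [NormedAddCommGroup Hp] [InnerProductSpace ℂ Hp] [CompleteSpace Hp]
    [NormedAddCommGroup Hm] [InnerProductSpace ℂ Hm] [CompleteSpace Hm]
    (A₀dom : Submodule ℂ H) (A₀ : H →ₗ[ℂ] H)
    (hdense : Dense (A₀dom : Set H))
    (hskew₁ : ∀ ψ ∈ A₀dom, (⟪A₀ ψ, ψ⟫).re ≤ 0)
    (hskew₂ : ∀ ψ ∈ A₀dom, (⟪-(A₀ ψ), ψ⟫).re ≤ 0)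
    (Adom : Submodule ℂ H) (A : H →ₗ[ℂ] H)
    (hAdom : ∀ x : H, x ∈ Adom ↔ ∃ η : H, ∀ φ ∈ A₀dom, ⟪x, -(A₀ φ)⟫ = ⟪η, φ⟫)
    (hAval : ∀ x ∈ Adom, ∀ φ ∈ A₀dom, ⟪x, -(A₀ φ)⟫ = ⟪A x, φ⟫)
    (Gp : H →ₗ[ℂ] Hp) (Gm : H →ₗ[ℂ] Hm)
    (hGreen : ∀ ψ ∈ Adom, ∀ φ ∈ Adom,
      ⟪A ψ, φ⟫ + ⟪ψ, A φ⟫ = ⟪Gp ψ, Gp φ⟫ - ⟪Gm ψ, Gm φ⟫)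
    (hSurj : ∀ (ξ : Hp) (ζ : Hm), ∃ ψ ∈ Adom, Gp ψ = ξ ∧ Gm ψ = ζ)
    (Φ : Hm →L[ℂ] Hp) (hΦ : ∀ ξ : Hm, ξ ≠ 0 → ‖Φ ξ‖ < ‖ξ‖)
    (l : ℝ) (ψ : H) (hψ : ψ ∈ Adom)
    (hbc : Gp ψ = Φ (Gm ψ))
    (heig : A ψ = (Complex.I * (l : ℂ)) • ψ) :
    Gp ψ = 0 ∧ Gm ψ = 0 ∧
      (ψ, (Complex.I * (l : ℂ)) • ψ) ∈
        closure {p : H × H | p.1 ∈ A₀dom ∧ p.2 = A₀ p.1} := by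
  -- Step 1: Green identity with φ = ψ gives ‖Gp ψ‖ = ‖Gm ψ‖.
  have hG := hGreen ψ hψ ψ hψ
  rw [heig] at hG
  have hLHS : ⟪(Complex.I * (l : ℂ)) • ψ, ψ⟫ + ⟪ψ, (Complex.I * (l : ℂ)) • ψ⟫ = 0 := by
    rw [inner_smul_left, inner_smul_right]
    have : (starRingEnd ℂ) (Complex.I * (l : ℂ)) = -(Complex.I * (l : ℂ)) := by
      simp [Complex.ext_iff]
    rw [this]; ring
  rw [hLHS] at hG
  have hnorm : ‖Gp ψ‖ = ‖Gm ψ‖ := by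
    have h1 : (⟪Gp ψ, Gp ψ⟫ : ℂ) = ⟪Gm ψ, Gm ψ⟫ := by linear_combination -hG
    rw [inner_self_eq_norm_sq_to_K, inner_self_eq_norm_sq_to_K] at h1
    have h2 : ‖Gp ψ‖ ^ 2 = ‖Gm ψ‖ ^ 2 := by exact_mod_cast h1
    exact (sq_eq_sq₀ (norm_nonneg _) (norm_nonneg _)).mp h2
  have hGm : Gm ψ = 0 := by
    by_contra h
    have := hΦ (Gm ψ) h
    rw [← hbc] at this
    rw [hnorm] at this
    exact lt_irrefl _ this
  have hGp : Gp ψ = 0 := by rw [hbc, hGm, map_zero]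
  refine ⟨hGp, hGm, ?_⟩
  -- Step 2: closure of the graph via double orthogonal complement in WithLp 2 (H × H).
  set E := WithLp 2 (H × H)
  let e : E ≃L[ℂ] H × H := WithLp.prodContinuousLinearEquiv 2 ℂ H H
  let V : Submodule ℂ E :=
    { carrier := {x : E | (e x).1 ∈ A₀dom ∧ (e x).2 = A₀ (e x).1}
      add_mem' := by
        rintro a b ⟨ha1, ha2⟩ ⟨hb1, hb2⟩
        have hab : e (a + b) = e a + e b := map_add e a b
        constructor
        · rw [hab, Prod.fst_add]; exact Submodule.add_mem _ ha1 hb1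
        · rw [hab, Prod.fst_add, Prod.snd_add, map_add, ha2, hb2]
      zero_mem' := by
        have h0 : e 0 = 0 := map_zero e
        constructor
        · rw [h0, Prod.fst_zero]; exact Submodule.zero_mem _
        · rw [h0, Prod.fst_zero, Prod.snd_zero, map_zero]
      smul_mem' := by
        rintro c a ⟨ha1, ha2⟩
        have hc : e (c • a) = c • e a := map_smul e c a
        constructor
        · rw [hc, Prod.smul_fst]; exact Submodule.smul_mem _ _ ha1
        · rw [hc, Prod.smul_fst, Prod.smul_snd, LinearMap.map_smul, ha2]
      }
  have key : (e.symm (ψ, (Complex.I * (l : ℂ)) • ψ)) ∈ Vᗮᗮ := by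
    intro x hx
    -- x ∈ Vᗮ: for all φ ∈ A₀dom, ⟪(φ, A₀φ), x⟫ = 0
    have hx' : ∀ φ ∈ A₀dom, ⟪φ, (e x).1⟫ + ⟪A₀ φ, (e x).2⟫ = 0 := by
      intro φ hφ
      have hmemV : e.symm (φ, A₀ φ) ∈ V := by
        have h := e.apply_symm_apply (φ, A₀ φ)
        exact ⟨by rw [h]; exact hφ, by rw [h]⟩
      have h := hx (e.symm (φ, A₀ φ)) hmemV
      rw [WithLp.prod_inner_apply] at h
      exact h
    -- hence (e x).2 ∈ Adom with A (e x).2 = (e x).1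
    have hx2 : ∀ φ ∈ A₀dom, ⟪(e x).2, -(A₀ φ)⟫ = ⟪(e x).1, φ⟫ := by
      intro φ hφ
      have h := hx' φ hφ
      have h' := congrArg (starRingEnd ℂ) h
      rw [map_add, map_zero, inner_conj_symm, inner_conj_symm] at h'
      rw [inner_neg_right]
      linear_combination -h'
    have hmem : (e x).2 ∈ Adom := (hAdom _).mpr ⟨(e x).1, hx2⟩
    have heq : A ((e x).2) = (e x).1 := by
      have hz : ∀ φ ∈ A₀dom, ⟪A ((e x).2) - (e x).1, φ⟫ = 0 := by
        intro φ hφ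
        rw [inner_sub_left, ← hAval _ hmem φ hφ, hx2 φ hφ]; ring
      have hfun : ∀ y : H, ⟪A ((e x).2) - (e x).1, y⟫ = 0 := by
        have hc1 : Continuous fun y : H => ⟪A ((e x).2) - (e x).1, y⟫ :=
          continuous_const.inner continuous_id
        have := Continuous.ext_on hdense hc1 continuous_const
          (fun y hy => hz y hy)
        exact fun y => congrFun this y
      have := hfun (A ((e x).2) - (e x).1)
      rw [inner_self_eq_zero] at this
      exact sub_eq_zero.mp this
    -- Now compute ⟪x, ψ-pair⟫ using Green with boundary terms zero.
    rw [WithLp.prod_inner_apply]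
    show ⟪(e x).1, ψ⟫ + ⟪(e x).2, (Complex.I * (l : ℂ)) • ψ⟫ = 0
    have hgr := hGreen ψ hψ ((e x).2) hmem
    rw [hGp, hGm, inner_zero_left, inner_zero_left, sub_zero, heig] at hgr
    have h' := congrArg (starRingEnd ℂ) hgr
    rw [map_add, map_zero, inner_conj_symm, inner_conj_symm] at h'
    rw [← heq]
    linear_combination h'
  rw [Submodule.orthogonal_orthogonal_eq_closure] at key
  -- transfer closure through the homeomorphism e
  have himg : {p : H × H | p.1 ∈ A₀dom ∧ p.2 = A₀ p.1} = e '' (V : Set E) := by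
    ext p
    constructor
    · rintro ⟨h1, h2⟩
      refine ⟨e.symm p, ?_, e.apply_symm_apply p⟩
      have h := e.apply_symm_apply p
      exact ⟨by rw [h]; exact h1, by rw [h]; exact h2⟩
    · rintro ⟨x, hx, rfl⟩
      exact hx
  rw [himg]
  exact image_closure_subset_closure_image e.continuous
    ⟨_, key, e.apply_symm_apply _⟩
end

section
/- Let (W_t)_{t≥0} be a C₀ contraction semigroup on a complex Hilbert space H with generator B, let K be a complex Hilbert space, and let j : D(B) → K be a linear map satisfying ⟨jψ, jφ⟩_K = −(⟨Bψ, φ⟩_H + ⟨ψ, Bφ⟩_H) for all ψ, φ ∈ D(B). Assume moreover that for every ψ ∈ D(B) and t ≥ 0 one has W_tψ ∈ D(B) and the map t ↦ W_tψ is differentiable with derivative B W_tψ. Then for every ψ ∈ D(B): (i) for all 0 ≤ t₁ ≤ t₂, ∫_{t₁}^{t₂} ‖j(W_tψ)‖²_K dt = ‖W_{t₁}ψ‖²_H − ‖W_{t₂}ψ‖²_H; (ii) the limit lim_{t→∞} ‖W_tψ‖²_H exists and ∫_0^∞ ‖j(W_tψ)‖²_K dt = ‖ψ‖²_H − lim_{t→∞}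 ‖W_tψ‖²_H ≤ ‖ψ‖²_H. -/
open scoped ComplexInnerProductSpace
open Filter Topology MeasureTheory Set

/-! Along a trajectory, the energy `‖W t ψ‖²` has derivative `2 Re ⟪W t ψ, B (W t ψ)⟫`, which the
identity for `j` turns into `-‖j (W t ψ)‖²`. So (i) is the fundamental theorem of calculus; no
continuity of the integrand is needed, since the derivative of a monotone function is automatically
integrable. The energy is nonincreasing and nonnegative, hence converges, and (ii) is the improper
version of (i). -/

theorem MonotoneOn.exists_tendsto_atTop_of_bddAbove {f : ℝ → ℝ} {a : ℝ}
    (hf : MonotoneOn f (Ici a)) (hbdd : BddAbove (f '' Ici a)) :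
    ∃ l, Tendsto f atTop (𝓝 l) := by
  have hmono : Monotone fun t => f (max a t) := fun x y hxy =>
    hf (le_max_left a x) (le_max_left a y) (max_le_max le_rfl hxy)
  have hrange : BddAbove (range fun t => f (max a t)) :=
    hbdd.mono (range_subset_iff.2 fun t => mem_image_of_mem f (le_max_left a t))
  refine ⟨_, (tendsto_atTop_ciSup hmono hrange).congr' ?_⟩
  filter_upwards [eventually_ge_atTop a] with t ht
  rw [max_eq_right ht]

section NonnegDeriv

variable {g g' : ℝ → ℝ} {a : ℝ}

theorem integral_eq_sub_of_hasDerivWithinAt_Ici_of_nonneg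
    (hg : ∀ x ∈ Ici a, HasDerivWithinAt g (g' x) (Ici a) x) (hg' : ∀ x ∈ Ioi a, 0 ≤ g' x)
    {b c : ℝ} (hab : a ≤ b) (hbc : b ≤ c) :
    ∫ x in b..c, g' x = g c - g b := by
  have hsub : Icc b c ⊆ Ici a := fun x hx => hab.trans hx.1
  have hcont : ContinuousOn g (Icc b c) :=
    fun x hx => (hg x (hsub hx)).continuousWithinAt.mono hsub
  have hderiv : ∀ x ∈ Ioo b c, HasDerivAt g (g' x) x :=
    fun x hx => (hg x (hab.trans hx.1.le)).hasDerivAt (Ici_mem_nhds (hab.trans_lt hx.1))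
  refine intervalIntegral.integral_eq_sub_of_hasDerivAt_of_le hbc hcont hderiv ?_
  exact (intervalIntegrable_iff_integrableOn_Ioc_of_le hbc).2 <|
    intervalIntegral.integrableOn_deriv_of_nonneg hcont hderiv
      fun x hx => hg' x (hab.trans_lt hx.1)

theorem integral_Ioi_of_hasDerivWithinAt_Ici_of_nonneg
    (hg : ∀ x ∈ Ici a, HasDerivWithinAt g (g' x) (Ici a) x) (hg' : ∀ x ∈ Ioi a, 0 ≤ g' x)
    {l : ℝ} (hl : Tendsto g atTop (𝓝 l)) :
    ∫ x in Ioi a, g' x = l - g a :=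
  integral_Ioi_of_hasDerivAt_of_nonneg (hg a self_mem_Ici).continuousWithinAt
    (fun x hx => (hg x (mem_Ioi.1 hx).le).hasDerivAt (Ici_mem_nhds hx)) hg' hl

theorem exists_tendsto_atTop_of_hasDerivWithinAt_Ici_of_nonneg
    (hg : ∀ x ∈ Ici a, HasDerivWithinAt g (g' x) (Ici a) x) (hg' : ∀ x ∈ Ioi a, 0 ≤ g' x)
    (hbdd : BddAbove (g '' Ici a)) :
    ∃ l, Tendsto g atTop (𝓝 l) := by
  refine MonotoneOn.exists_tendsto_atTop_of_bddAbove ?_ hbdd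
  refine monotoneOn_of_hasDerivWithinAt_nonneg (f' := g') (convex_Ici a)
    (fun x hx => (hg x hx).continuousWithinAt) (fun x hx => ?_) (fun x hx => ?_)
  · rw [interior_Ici] at hx ⊢
    exact (hg x (mem_Ioi.1 hx).le).mono Ioi_subset_Ici_self
  · rw [interior_Ici] at hx
    exact hg' x hx

end NonnegDeriv

theorem HasDerivWithinAt.neg_norm_sq_of_inner_self_eq
    {E F : Type*} [NormedAddCommGroup E] [InnerProductSpace ℂ E]
    [NormedAddCommGroup F] [InnerProductSpace ℂ F]
    {u : ℝ → E} {v : E} {w : F} {s : Set ℝ} {t : ℝ}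
    (hu : HasDerivWithinAt u v s t) (hw : ⟪w, w⟫ = -(⟪v, u t⟫ + ⟪u t, v⟫)) :
    HasDerivWithinAt (fun x => -‖u x‖ ^ 2) (‖w‖ ^ 2) s t := by
  let _ : InnerProductSpace ℝ E := InnerProductSpace.rclikeToReal ℂ E
  refine hu.norm_sq.neg.congr_deriv ?_
  rw [real_inner_eq_re_inner ℂ, ← inner_self_eq_norm_sq (𝕜 := ℂ) w, hw]
  simp only [map_neg, map_add, inner_re_symm (𝕜 := ℂ) v]
  ring

theorem stmt_8_general
    {H K : Type*}
    [NormedAddCommGroup H] [InnerProductSpace ℂ H]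
    [NormedAddCommGroup K] [InnerProductSpace ℂ K]
    (W : ℝ → H →L[ℂ] H)
    (hW0 : W 0 = 1)
    (Bdom : Submodule ℂ H) (B : H →ₗ[ℂ] H)
    (j : H →ₗ[ℂ] K)
    (hj : ∀ ψ ∈ Bdom, ∀ φ ∈ Bdom, ⟪j ψ, j φ⟫ = -(⟪B ψ, φ⟫ + ⟪ψ, B φ⟫))
    (hinv : ∀ ψ ∈ Bdom, ∀ t : ℝ, 0 ≤ t → W t ψ ∈ Bdom ∧
      HasDerivWithinAt (fun s : ℝ => W s ψ) (B (W t ψ)) (Set.Ici 0) t) :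
    ∀ ψ ∈ Bdom,
      (∀ t₁ t₂ : ℝ, 0 ≤ t₁ → t₁ ≤ t₂ →
        (∫ t in t₁..t₂, ‖j (W t ψ)‖ ^ 2) = ‖W t₁ ψ‖ ^ 2 - ‖W t₂ ψ‖ ^ 2) ∧
      ∃ L : ℝ, Tendsto (fun t : ℝ => ‖W t ψ‖ ^ 2) atTop (𝓝 L) ∧
        (∫ t in Set.Ioi (0 : ℝ), ‖j (W t ψ)‖ ^ 2) = ‖ψ‖ ^ 2 - L ∧
        (∫ t in Set.Ioi (0 : ℝ), ‖j (W t ψ)‖ ^ 2) ≤ ‖ψ‖ ^ 2 := by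
  intro ψ hψ
  have hderiv : ∀ t ∈ Ici (0 : ℝ),
      HasDerivWithinAt (fun s => -‖W s ψ‖ ^ 2) (‖j (W t ψ)‖ ^ 2) (Ici 0) t := by
    intro t ht
    obtain ⟨hmem, hW⟩ := hinv ψ hψ t ht
    exact hW.neg_norm_sq_of_inner_self_eq (hj _ hmem _ hmem)
  have hnonneg : ∀ t ∈ Ioi (0 : ℝ), 0 ≤ ‖j (W t ψ)‖ ^ 2 := fun _ _ => sq_nonneg _
  have hbdd : BddAbove ((fun s => -‖W s ψ‖ ^ 2) '' Ici 0) :=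
    ⟨0, by rintro _ ⟨t, -, rfl⟩; exact neg_nonpos.2 (sq_nonneg _)⟩
  obtain ⟨l, hl⟩ := exists_tendsto_atTop_of_hasDerivWithinAt_Ici_of_nonneg hderiv hnonneg hbdd
  have hl_nonpos : l ≤ 0 := le_of_tendsto' hl fun t => neg_nonpos.2 (sq_nonneg _)
  have hIoi : ∫ t in Ioi (0 : ℝ), ‖j (W t ψ)‖ ^ 2 = ‖ψ‖ ^ 2 + l := by
    rw [integral_Ioi_of_hasDerivWithinAt_Ici_of_nonneg hderiv hnonneg hl, hW0]
    simp only [one_apply_eq_self]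
    ring
  refine ⟨fun t₁ t₂ h₁ h₁₂ => ?_, -l, by simpa using hl.neg, by rw [hIoi]; ring, by linarith⟩
  rw [integral_eq_sub_of_hasDerivWithinAt_Ici_of_nonneg hderiv hnonneg h₁ h₁₂]
  ring

/-- Let `(W t)` be a C₀ contraction semigroup on a complex Hilbert space
`H` with generator `B` (domain `Bdom`, characterized by `hgen`/`hgenval`), let `K` be a
complex Hilbert space and `j : D(B) → K` linear with
`⟪jψ, jφ⟫ = −(⟪Bψ, φ⟫ + ⟪ψ, Bφ⟫)` for all `ψ, φ ∈ D(B)`. Assume `W t ψ ∈ D(B)` for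
`ψ ∈ D(B)`, `t ≥ 0`, and `t ↦ W t ψ` is differentiable with derivative `B (W t ψ)`.
Then for every `ψ ∈ D(B)`:
(i) `∫_{t₁}^{t₂} ‖j (W t ψ)‖² dt = ‖W t₁ ψ‖² − ‖W t₂ ψ‖²` for `0 ≤ t₁ ≤ t₂`; and
(ii) `lim_{t→∞} ‖W t ψ‖²` exists, with
`∫_0^∞ ‖j (W t ψ)‖² dt = ‖ψ‖² − lim_{t→∞} ‖W t ψ‖² ≤ ‖ψ‖²`. -/
theorem stmt_8
    {H K : Type*}
    [NormedAddCommGroup H] [InnerProductSpace ℂ H] [CompleteSpace H]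
    [NormedAddCommGroup K] [InnerProductSpace ℂ K] [CompleteSpace K]
    (W : ℝ → H →L[ℂ] H)
    (hW0 : W 0 = 1)
    (hWsemi : ∀ s t : ℝ, 0 ≤ s → 0 ≤ t → W (s + t) = (W s).comp (W t))
    (hWcont : ∀ x : H, ContinuousOn (fun t : ℝ => W t x) (Set.Ici 0))
    (hWcontr : ∀ t : ℝ, 0 ≤ t → ∀ x : H, ‖W t x‖ ≤ ‖x‖)
    (Bdom : Submodule ℂ H) (B : H →ₗ[ℂ] H)
    (hgen : ∀ x : H, x ∈ Bdom ↔
      ∃ η : H, Tendsto (fun t : ℝ => t⁻¹ • (W t x - x)) (𝓝[>] 0) (𝓝 η))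
    (hgenval : ∀ x ∈ Bdom,
      Tendsto (fun t : ℝ => t⁻¹ • (W t x - x)) (𝓝[>] 0) (𝓝 (B x)))
    (j : H →ₗ[ℂ] K)
    (hj : ∀ ψ ∈ Bdom, ∀ φ ∈ Bdom, ⟪j ψ, j φ⟫ = -(⟪B ψ, φ⟫ + ⟪ψ, B φ⟫))
    (hinv : ∀ ψ ∈ Bdom, ∀ t : ℝ, 0 ≤ t → W t ψ ∈ Bdom ∧
      HasDerivWithinAt (fun s : ℝ => W s ψ) (B (W t ψ)) (Set.Ici 0) t) :
    ∀ ψ ∈ Bdom,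
      (∀ t₁ t₂ : ℝ, 0 ≤ t₁ → t₁ ≤ t₂ →
        (∫ t in t₁..t₂, ‖j (W t ψ)‖ ^ 2) = ‖W t₁ ψ‖ ^ 2 - ‖W t₂ ψ‖ ^ 2) ∧
      ∃ L : ℝ, Tendsto (fun t : ℝ => ‖W t ψ‖ ^ 2) atTop (𝓝 L) ∧
        (∫ t in Set.Ioi (0 : ℝ), ‖j (W t ψ)‖ ^ 2) = ‖ψ‖ ^ 2 - L ∧
        (∫ t in Set.Ioi (0 : ℝ), ‖j (W t ψ)‖ ^ 2) ≤ ‖ψ‖ ^ 2 :=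
  stmt_8_general W hW0 Bdom B j hj hinv
end

section
/- Let a < b be real numbers, let V : [a,b] → ℝ be bounded and measurable, and let ψ, φ : ℝ → ℂ be twice continuously differentiable on [a,b]. Define G₊ψ := (1/√2)·(ψ(a) − i ψ'(a), ψ(b) + i ψ'(b)) ∈ ℂ² and G₋ψ := (1/√2)·(ψ(a) + i ψ'(a), ψ(b) − i ψ'(b)) ∈ ℂ², and similarly for φ. Then ∫_a^b (−i)(−ψ''(x) + V(x)ψ(x)) · conj(φ(x)) dx + ∫_a^b ψ(x) · conj((−i)(−φ''(x) + V(x)φ(x))) dx = ⟨G₊ψ, G₊φ⟩_{ℂ²} − ⟨G₋ψ, G₋φ⟩_{ℂ²}, where ⟨u, v⟩_{ℂ²} = u₁·conj(v₁) + u₂·conj(v₂). -/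
/-!
Since `V` is real, the potential terms cancel pointwise and the two integrands add up to
`i (ψ'' φ̄ - ψ φ̄'')`, the derivative of `i (ψ' φ̄ - ψ φ̄')`. By the fundamental theorem of
calculus the left side is the boundary term `i [ψ' φ̄ - ψ φ̄']ₐᵇ`, and expanding
`⟨G₊ψ, G₊φ⟩ - ⟨G₋ψ, G₋φ⟩` produces the same term at each endpoint.
-/

open Complex

open Set MeasureTheory intervalIntegral ComplexConjugate

theorem schrodinger_lagrange_identity (v : ℝ) (u u'' w w'' : ℂ) :
    -I * (-u'' + v * u) * conj w + u * conj (-I * (-w'' + v * w)) =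
      I * (u'' * conj w - u * conj w'') := by
  simp only [map_mul, map_add, map_neg, conj_I, conj_ofReal]
  ring

theorem inv_sqrt_two_mul_conj_sub_inv_sqrt_two_mul_conj (u u' w w' : ℂ) :
    1 / (Real.sqrt 2 : ℂ) * (u + I * u') * conj (1 / (Real.sqrt 2 : ℂ) * (w + I * w')) -
        1 / (Real.sqrt 2 : ℂ) * (u - I * u') * conj (1 / (Real.sqrt 2 : ℂ) * (w - I * w')) =
      I * (u' * conj w - u * conj w') := by
  have hsqrt : (Real.sqrt 2 : ℂ) ^ 2 = 2 := by
    rw [← ofReal_pow, Real.sq_sqrt zero_le_two, ofReal_ofNat]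
  have hsqrt_ne : (Real.sqrt 2 : ℂ) ≠ 0 := by
    rw [ofReal_ne_zero]; positivity
  simp only [map_mul, map_add, map_sub, map_div₀, map_one, conj_I, conj_ofReal]
  field_simp
  linear_combination I * (u * conj w' - u' * conj w) * hsqrt

theorem IntervalIntegrable.ofReal_mul_of_bounded {a b : ℝ} {V : ℝ → ℝ} {f : ℝ → ℂ}
    (hV : Measurable V) (hVbdd : ∃ C, ∀ x ∈ uIcc a b, |V x| ≤ C)
    (hf : IntervalIntegrable f volume a b) :
    IntervalIntegrable (fun x => (V x : ℂ) * f x) volume a b := by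
  obtain ⟨C, hC⟩ := hVbdd
  rw [intervalIntegrable_iff] at hf ⊢
  refine hf.bdd_mul (c := C) (measurable_ofReal.comp hV).aestronglyMeasurable ?_
  filter_upwards [ae_restrict_mem measurableSet_uIoc] with x hx
  simpa using hC x (uIoc_subset_uIcc hx)

section Lagrange

variable {a b : ℝ} {V : ℝ → ℝ} {ψ ψ' ψ'' φ φ' φ'' : ℝ → ℂ}

theorem hasDerivAt_mul_conj_sub_mul_conj {x : ℝ}
    (hψ : HasDerivAt ψ (ψ' x) x) (hψ' : HasDerivAt ψ' (ψ'' x) x)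
    (hφ : HasDerivAt φ (φ' x) x) (hφ' : HasDerivAt φ' (φ'' x) x) :
    HasDerivAt (fun y => ψ' y * conj (φ y) - ψ y * conj (φ' y))
      (ψ'' x * conj (φ x) - ψ x * conj (φ'' x)) x := by
  have hφc : HasDerivAt (fun y => conj (φ y)) (conj (φ' x)) x := hφ.star
  have hφ'c : HasDerivAt (fun y => conj (φ' y)) (conj (φ'' x)) x := hφ'.star
  exact ((hψ'.mul hφc).sub (hψ.mul hφ'c)).congr_deriv (by ring)

theorem intervalIntegrable_mul_conj_sub_mul_conj (hψ : ContinuousOn ψ (uIcc a b))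
    (hψ'' : ContinuousOn ψ'' (uIcc a b)) (hφ : ContinuousOn φ (uIcc a b))
    (hφ'' : ContinuousOn φ'' (uIcc a b)) :
    IntervalIntegrable (fun x => ψ'' x * conj (φ x) - ψ x * conj (φ'' x)) volume a b :=
  ((hψ''.mul (continuous_conj.comp_continuousOn hφ)).sub
    (hψ.mul (continuous_conj.comp_continuousOn hφ''))).intervalIntegrable

theorem integral_mul_conj_sub_mul_conj_eq
    (hψ : ∀ x ∈ uIcc a b, HasDerivAt ψ (ψ' x) x)
    (hψ' : ∀ x ∈ uIcc a b, HasDerivAt ψ' (ψ'' x) x) (hψ'' : ContinuousOn ψ'' (uIcc a b))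
    (hφ : ∀ x ∈ uIcc a b, HasDerivAt φ (φ' x) x)
    (hφ' : ∀ x ∈ uIcc a b, HasDerivAt φ' (φ'' x) x) (hφ'' : ContinuousOn φ'' (uIcc a b)) :
    ∫ x in a..b, (ψ'' x * conj (φ x) - ψ x * conj (φ'' x)) =
      (ψ' b * conj (φ b) - ψ b * conj (φ' b)) - (ψ' a * conj (φ a) - ψ a * conj (φ' a)) :=
  integral_eq_sub_of_hasDerivAt
    (fun x hx => hasDerivAt_mul_conj_sub_mul_conj (hψ x hx) (hψ' x hx) (hφ x hx) (hφ' x hx))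
    (intervalIntegrable_mul_conj_sub_mul_conj (HasDerivAt.continuousOn hψ) hψ''
      (HasDerivAt.continuousOn hφ) hφ'')

theorem intervalIntegrable_schrodinger_mul_conj (hV : Measurable V)
    (hVbdd : ∃ C, ∀ x ∈ uIcc a b, |V x| ≤ C) (hψ : ContinuousOn ψ (uIcc a b))
    (hψ'' : ContinuousOn ψ'' (uIcc a b)) (hφ : ContinuousOn φ (uIcc a b)) :
    IntervalIntegrable (fun x => -I * (-(ψ'' x) + V x * ψ x) * conj (φ x)) volume a b :=
  ((hψ''.neg.intervalIntegrable.add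
    (hψ.intervalIntegrable.ofReal_mul_of_bounded hV hVbdd)).const_mul (-I)).mul_continuousOn
      (continuous_conj.comp_continuousOn hφ)

theorem integral_schrodinger_mul_conj_add_integral_mul_conj_schrodinger (hV : Measurable V)
    (hVbdd : ∃ C, ∀ x ∈ uIcc a b, |V x| ≤ C)
    (hψ : ∀ x ∈ uIcc a b, HasDerivAt ψ (ψ' x) x)
    (hψ' : ∀ x ∈ uIcc a b, HasDerivAt ψ' (ψ'' x) x) (hψ'' : ContinuousOn ψ'' (uIcc a b))
    (hφ : ∀ x ∈ uIcc a b, HasDerivAt φ (φ' x) x)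
    (hφ' : ∀ x ∈ uIcc a b, HasDerivAt φ' (φ'' x) x) (hφ'' : ContinuousOn φ'' (uIcc a b)) :
    (∫ x in a..b, -I * (-(ψ'' x) + V x * ψ x) * conj (φ x)) +
        ∫ x in a..b, ψ x * conj (-I * (-(φ'' x) + V x * φ x)) =
      I * ((ψ' b * conj (φ b) - ψ b * conj (φ' b)) -
        (ψ' a * conj (φ a) - ψ a * conj (φ' a))) := by
  have hψc := HasDerivAt.continuousOn hψ
  have hφc := HasDerivAt.continuousOn hφ
  have hfirst := intervalIntegrable_schrodinger_mul_conj hV hVbdd hψc hψ'' hφc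
  have hsum := (intervalIntegrable_mul_conj_sub_mul_conj hψc hψ'' hφc hφ'').const_mul I
  have hsecond : IntervalIntegrable (fun x => ψ x * conj (-I * (-(φ'' x) + V x * φ x)))
      volume a b := by
    convert hsum.sub hfirst using 2 with x
    exact eq_sub_of_add_eq' (schrodinger_lagrange_identity (V x) (ψ x) (ψ'' x) (φ x) (φ'' x))
  rw [← integral_add hfirst hsecond]
  simp_rw [schrodinger_lagrange_identity]
  rw [intervalIntegral.integral_const_mul,
    integral_mul_conj_sub_mul_conj_eq hψ hψ' hψ'' hφ hφ' hφ'']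

end Lagrange

/-- Let `a < b`, let `V : [a,b] → ℝ` be bounded and measurable, and let
`ψ, φ : ℝ → ℂ` be twice continuously differentiable on `[a,b]` (with first derivatives
`ψ', φ'` and continuous second derivatives `ψ'', φ''`). With
`G₊ψ = (1/√2)·(ψ(a) − i ψ'(a), ψ(b) + i ψ'(b))` and
`G₋ψ = (1/√2)·(ψ(a) + i ψ'(a), ψ(b) − i ψ'(b))`, one has
`∫_a^b (−i)(−ψ'' + Vψ) conj(φ) + ∫_a^b ψ conj((−i)(−φ'' + Vφ))
  = ⟨G₊ψ, G₊φ⟩_{ℂ²} − ⟨G₋ψ, G₋φ⟩_{ℂ²}`,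
where `⟨u, v⟩_{ℂ²} = u₁ conj(v₁) + u₂ conj(v₂)`. -/
theorem stmt_9
    (a b : ℝ) (hab : a < b)
    (V : ℝ → ℝ) (hVmeas : Measurable V)
    (hVbdd : ∃ C : ℝ, ∀ x ∈ Set.Icc a b, |V x| ≤ C)
    (ψ ψ' ψ'' φ φ' φ'' : ℝ → ℂ)
    (hψ : ∀ x ∈ Set.Icc a b, HasDerivAt ψ (ψ' x) x)
    (hψ' : ∀ x ∈ Set.Icc a b, HasDerivAt ψ' (ψ'' x) x)
    (hψ'' : ContinuousOn ψ'' (Set.Icc a b))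
    (hφ : ∀ x ∈ Set.Icc a b, HasDerivAt φ (φ' x) x)
    (hφ' : ∀ x ∈ Set.Icc a b, HasDerivAt φ' (φ'' x) x)
    (hφ'' : ContinuousOn φ'' (Set.Icc a b)) :
    (∫ x in a..b, (-Complex.I) * (-(ψ'' x) + (V x : ℂ) * ψ x) * (starRingEnd ℂ) (φ x)) +
      (∫ x in a..b, ψ x * (starRingEnd ℂ) ((-Complex.I) * (-(φ'' x) + (V x : ℂ) * φ x))) =
    (((1 / (Real.sqrt 2 : ℂ)) * (ψ a - Complex.I * ψ' a)) *
        (starRingEnd ℂ) ((1 / (Real.sqrt 2 : ℂ)) * (φ a - Complex.I * φ' a)) +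
      ((1 / (Real.sqrt 2 : ℂ)) * (ψ b + Complex.I * ψ' b)) *
        (starRingEnd ℂ) ((1 / (Real.sqrt 2 : ℂ)) * (φ b + Complex.I * φ' b))) -
    (((1 / (Real.sqrt 2 : ℂ)) * (ψ a + Complex.I * ψ' a)) *
        (starRingEnd ℂ) ((1 / (Real.sqrt 2 : ℂ)) * (φ a + Complex.I * φ' a)) +
      ((1 / (Real.sqrt 2 : ℂ)) * (ψ b - Complex.I * ψ' b)) *
        (starRingEnd ℂ) ((1 / (Real.sqrt 2 : ℂ)) * (φ b - Complex.I * φ' b))) := by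
  rw [← uIcc_of_le hab.le] at hVbdd hψ hψ' hψ'' hφ hφ' hφ''
  rw [integral_schrodinger_mul_conj_add_integral_mul_conj_schrodinger hVmeas hVbdd
    hψ hψ' hψ'' hφ hφ' hφ'']
  linear_combination inv_sqrt_two_mul_conj_sub_inv_sqrt_two_mul_conj (ψ a) (ψ' a) (φ a) (φ' a) -
    inv_sqrt_two_mul_conj_sub_inv_sqrt_two_mul_conj (ψ b) (ψ' b) (φ b) (φ' b)
end
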